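/- There exists a constant C_k > 0 such that for every irrational x ∈ (0,1) and r ≥ 1, |W_finite(p_r/q_r) - Σ_{j=0}^{r-1} (-1)^j β_{j-1}(x) log(1/G^j(x))| ≤ C₁·G^r(x)/q_r(x), where W_finite(p/q) = Σ_{j=0}^{r-1}(-1)^j β_{j-1}(p/q) log(1/G^j(p/q)) is the finite Wilton sum of the rational p_r/q_r. -/

import Mathlib

open Finset Filter

noncomputable def gaussMap (x : ℝ) : ℝ := Int.fract (1 / x)

/-- `betaP x n` is β_{n-1}(x) = ∏_{i=0}^{n-1} Gⁱ(x), with `betaP x 0 = 1`. -/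
noncomputable def betaP (x : ℝ) (n : ℕ) : ℝ := ∏ i ∈ Finset.range n, gaussMap^[i] x

/-- the (n+1)-st partial quotient a_{n+1} = ⌊1/Gⁿ(x)⌋ of the regular continued fraction. -/
noncomputable def cfDigit (x : ℝ) (n : ℕ) : ℤ := ⌊1 / gaussMap^[n] x⌋

/-- `convAux x n = ((pₙ, qₙ), (pₙ₋₁, qₙ₋₁))`, the convergents of the regular continued
fraction of `x`, with `p₋₁ = 1, q₋₁ = 0, p₀ = 0, q₀ = 1`. -/
noncomputable def convAux (x : ℝ) : ℕ → (ℤ × ℤ) × (ℤ × ℤ)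
  | 0 => ((0, 1), (1, 0))
  | n + 1 =>
      ((cfDigit x n * (convAux x n).1.1 + (convAux x n).2.1,
        cfDigit x n * (convAux x n).1.2 + (convAux x n).2.2),
       (convAux x n).1)

/-- numerator pₙ of the n-th principal convergent of `x`. -/
noncomputable def pConv (x : ℝ) (n : ℕ) : ℤ := (convAux x n).1.1

/-- denominator qₙ of the n-th principal convergent of `x`. -/
noncomputable def qConv (x : ℝ) (n : ℕ) : ℤ := (convAux x n).1.2

/-- truncated Wilton sum of length `r`. -/
noncomputable def wiltonFinite (y : ℝ) (r : ℕ) : ℝ :=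
  ∑ j ∈ Finset.range r, (-1 : ℝ) ^ j * betaP y j * Real.log (1 / gaussMap^[j] y)

/-!
Write `t_m = Gᵐ(x)`, `a_m = ⌊1/t_m⌋`, `y = p_r/q_r`, and let `K_m = K(a_m, …, a_{r-1})` be the
reversed continuants. The Gauss orbit of `y` is `Gʲ(y) = K_{j+1}/K_j` for `j + 1 < r`, so
`β_{j-1}(y) = K_j/q_r`, and both Wilton sums are alternating sums of `u_j log(u_j/u_{j+1})`, for
`u_j = K_j/q_r` and for `u_j = β_{j-1}(x)`. The identity `K_m - β_{m-1}(x) q_r = ±q_{m-1} β_r(x)`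
shows that the two sequences differ by `q_{m-1} β_r(x)/q_r`; since both are at least `1/(2q_m)`
and `β_{m-1}(x) q_m ≤ 1`, the `j`-th terms differ by at most `5 t_{j+1} ⋯ t_r / q_r`. Finally
`t_i t_{i+1} ≤ 1/2`, so these tail products sum to at most `4 t_r`.
-/

lemma irrational_gaussMap {x : ℝ} (hx : Irrational x) : Irrational (gaussMap x) :=
  (one_div x ▸ hx.inv).sub_intCast _

lemma gaussMap_pos_of_irrational {x : ℝ} (hx : Irrational x) : 0 < gaussMap x :=
  (Int.fract_nonneg _).lt_of_ne fun h => (irrational_gaussMap hx).ne_zero h.symm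

lemma iterate_gaussMap_mem_Ioo {x : ℝ} (hx : Irrational x) (hx₀ : 0 < x) (hx₁ : x < 1)
    (n : ℕ) : gaussMap^[n] x ∈ Set.Ioo 0 1 := by
  have hirr : ∀ n, Irrational (gaussMap^[n] x) := fun n => by
    induction n with
    | zero => exact hx
    | succ n ih => rw [Function.iterate_succ_apply']; exact irrational_gaussMap ih
  cases n with
  | zero => exact ⟨hx₀, hx₁⟩
  | succ n =>
    rw [Function.iterate_succ_apply']
    exact ⟨gaussMap_pos_of_irrational (hirr n), Int.fract_lt_one _⟩

section Orbit

variable {x : ℝ}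

lemma iterate_gaussMap_succ (n : ℕ) :
    gaussMap^[n + 1] x = 1 / gaussMap^[n] x - cfDigit x n := by
  rw [Function.iterate_succ_apply']
  exact Int.fract.eq_def _

lemma one_le_cfDigit (hx : ∀ n, gaussMap^[n] x ∈ Set.Ioo 0 1) (n : ℕ) :
    (1 : ℝ) ≤ cfDigit x n := by
  have h := one_le_one_div (hx n).1 (hx n).2.le
  exact_mod_cast Int.le_floor.2 (by exact_mod_cast h)

lemma iterate_gaussMap_mul_cfDigit_add (hx : ∀ n, gaussMap^[n] x ∈ Set.Ioo 0 1) (n : ℕ) :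
    gaussMap^[n] x * (cfDigit x n + gaussMap^[n + 1] x) = 1 := by
  rw [iterate_gaussMap_succ]
  field_simp [(hx n).1.ne']
  ring

lemma iterate_gaussMap_mul_succ_le_half (hx : ∀ n, gaussMap^[n] x ∈ Set.Ioo 0 1) (n : ℕ) :
    gaussMap^[n] x * gaussMap^[n + 1] x ≤ 1 / 2 := by
  have hkey := iterate_gaussMap_mul_cfDigit_add hx n
  have ha := one_le_cfDigit hx n
  obtain ⟨h₀, h₁⟩ := hx n
  obtain ⟨h₀', h₁'⟩ := hx (n + 1)
  nlinarith

end Orbit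

/-- `pPrev x m` and `qPrev x m` are `p_{m-1}` and `q_{m-1}` (so `p_{-1} = 1`, `q_{-1} = 0`). -/
noncomputable def pPrev (x : ℝ) (m : ℕ) : ℝ := (convAux x m).2.1

noncomputable def qPrev (x : ℝ) (m : ℕ) : ℝ := (convAux x m).2.2

section Convergents

variable {x : ℝ}

@[simp] lemma pPrev_zero : pPrev x 0 = 1 := by simp [pPrev, convAux]
@[simp] lemma qPrev_zero : qPrev x 0 = 0 := by simp [qPrev, convAux]
@[simp] lemma pPrev_one : pPrev x 1 = 0 := by simp [pPrev, convAux]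
@[simp] lemma qPrev_one : qPrev x 1 = 1 := by simp [qPrev, convAux]

lemma pPrev_succ (m : ℕ) : pPrev x (m + 1) = pConv x m := rfl
lemma qPrev_succ (m : ℕ) : qPrev x (m + 1) = qConv x m := rfl

lemma pPrev_add_two (m : ℕ) : pPrev x (m + 2) = cfDigit x m * pPrev x (m + 1) + pPrev x m := by
  simp [pPrev, convAux]

lemma qPrev_add_two (m : ℕ) : qPrev x (m + 2) = cfDigit x m * qPrev x (m + 1) + qPrev x m := by
  simp [qPrev, convAux]

lemma betaP_succ (m : ℕ) : betaP x (m + 1) = betaP x m * gaussMap^[m] x :=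
  prod_range_succ _ _

lemma betaP_mul_prod_Ico {m n : ℕ} (h : m ≤ n) :
    betaP x m * ∏ i ∈ Ico m n, gaussMap^[i] x = betaP x n :=
  prod_range_mul_prod_Ico _ h

lemma betaP_pos (hx : ∀ n, gaussMap^[n] x ∈ Set.Ioo 0 1) (m : ℕ) : 0 < betaP x m :=
  prod_pos fun i _ => (hx i).1

lemma qPrev_bounds (hx : ∀ n, gaussMap^[n] x ∈ Set.Ioo 0 1) (m : ℕ) :
    0 ≤ qPrev x m ∧ qPrev x m ≤ qPrev x (m + 1) ∧ 1 ≤ qPrev x (m + 1) := by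
  induction m with
  | zero => simp
  | succ m ih =>
    have ha := one_le_cfDigit hx m
    rw [qPrev_add_two]
    refine ⟨by linarith, by nlinarith, by nlinarith⟩

lemma qConv_pos (hx : ∀ n, gaussMap^[n] x ∈ Set.Ioo 0 1) (r : ℕ) : (0 : ℝ) < qConv x r := by
  rw [← qPrev_succ]; linarith [(qPrev_bounds hx r).2.2]

lemma pPrev_sub_qPrev_mul (hx : ∀ n, gaussMap^[n] x ∈ Set.Ioo 0 1) (m : ℕ) :
    pPrev x m - qPrev x m * x = (-1) ^ m * betaP x m := by
  induction m using Nat.twoStepInduction with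
  | zero => simp [betaP]
  | one => simp [betaP]
  | more m ih₀ ih₁ =>
    rw [pPrev_add_two, qPrev_add_two, betaP_succ, betaP_succ]
    rw [betaP_succ] at ih₁
    linear_combination (cfDigit x m : ℝ) * ih₁ + ih₀ -
      (-1) ^ m * betaP x m * iterate_gaussMap_mul_cfDigit_add hx m

lemma betaP_mul_qPrev_add (hx : ∀ n, gaussMap^[n] x ∈ Set.Ioo 0 1) (m : ℕ) :
    betaP x m * (qPrev x (m + 1) + qPrev x m * gaussMap^[m] x) = 1 := by
  induction m with
  | zero => simp [betaP]
  | succ m ih =>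
    rw [betaP_succ, qPrev_add_two]
    linear_combination ih + betaP x m * qPrev x (m + 1) * iterate_gaussMap_mul_cfDigit_add hx m

lemma betaP_mul_qPrev_succ_le_one (hx : ∀ n, gaussMap^[n] x ∈ Set.Ioo 0 1) (m : ℕ) :
    betaP x m * qPrev x (m + 1) ≤ 1 := by
  have h := betaP_mul_qPrev_add hx m
  have hβ := (betaP_pos hx m).le
  have := mul_nonneg hβ (mul_nonneg (qPrev_bounds hx m).1 (hx m).1.le)
  linarith

lemma betaP_mul_qPrev_le_one (hx : ∀ n, gaussMap^[n] x ∈ Set.Ioo 0 1) (m : ℕ) :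
    betaP x m * qPrev x m ≤ 1 := by
  have hβ := (betaP_pos hx m).le
  have := mul_le_mul_of_nonneg_left (qPrev_bounds hx m).2.1 hβ
  linarith [betaP_mul_qPrev_succ_le_one hx m]

lemma one_le_two_mul_qPrev_succ_mul_betaP (hx : ∀ n, gaussMap^[n] x ∈ Set.Ioo 0 1) (m : ℕ) :
    1 ≤ 2 * qPrev x (m + 1) * betaP x m := by
  have h := betaP_mul_qPrev_add hx m
  have hβ := (betaP_pos hx m).le
  obtain ⟨hq₀, hq, -⟩ := qPrev_bounds hx m
  have : qPrev x m * gaussMap^[m] x ≤ qPrev x (m + 1) := by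
    nlinarith [(hx m).1, (hx m).2]
  nlinarith

end Convergents

/-- The reversed continuant `K(a_m, …, a_{r-1})` of the digits of `x`, written through the
convergents (as `±(q_{m-1} p_r - p_{m-1} q_r)`) so that it makes sense for every `m`. -/
noncomputable def revCont (x : ℝ) (r m : ℕ) : ℝ :=
  (-1) ^ (m + 1) * (qPrev x m * pConv x r - pPrev x m * qConv x r)

section RevCont

variable {x : ℝ} {r : ℕ}

lemma revCont_zero : revCont x r 0 = qConv x r := by simp [revCont]

lemma revCont_one : revCont x r 1 = pConv x r := by simp [revCont]

lemma revCont_self_add_one : revCont x r (r + 1) = 0 := by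
  rw [revCont, pPrev_succ, qPrev_succ]; ring

lemma revCont_eq (m : ℕ) :
    revCont x r m = cfDigit x m * revCont x r (m + 1) + revCont x r (m + 2) := by
  rw [revCont, revCont, revCont, pPrev_add_two, qPrev_add_two]; ring

lemma qPrev_succ_mul_revCont_add (m : ℕ) :
    qPrev x (m + 1) * revCont x r m + qPrev x m * revCont x r (m + 1) = qConv x r := by
  induction m with
  | zero => simp [revCont_zero]
  | succ m ih =>
    linear_combination ih + revCont x r (m + 1) * qPrev_add_two (x := x) m -
      qPrev x (m + 1) * revCont_eq (x := x) (r := r) m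

lemma revCont_self (hx : ∀ n, gaussMap^[n] x ∈ Set.Ioo 0 1) : revCont x r r = 1 := by
  have h := qPrev_succ_mul_revCont_add (x := x) (r := r) r
  rw [revCont_self_add_one, qPrev_succ, mul_zero, add_zero] at h
  exact (mul_eq_left₀ (qConv_pos hx r).ne').1 h

lemma revCont_bounds (hx : ∀ n, gaussMap^[n] x ∈ Set.Ioo 0 1) {m : ℕ} (hm : m ≤ r) :
    1 ≤ revCont x r m ∧ 0 ≤ revCont x r (m + 1) ∧ revCont x r (m + 1) ≤ revCont x r m := by
  induction hm using Nat.decreasingInduction with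
  | self => simp [revCont_self hx, revCont_self_add_one]
  | of_succ k _ ih =>
    have ha := one_le_cfDigit hx k
    have hk := revCont_eq (x := x) (r := r) k
    refine ⟨by nlinarith, by linarith, by nlinarith⟩

lemma revCont_succ_lt (hx : ∀ n, gaussMap^[n] x ∈ Set.Ioo 0 1) {m : ℕ} (hm : m + 1 < r) :
    revCont x r (m + 1) < revCont x r m := by
  have h₂ := (revCont_bounds hx (m := m + 2) hm).1
  have h₁ := (revCont_bounds hx (m := m + 1) hm.le).1
  have ha := one_le_cfDigit hx m
  have hk := revCont_eq (x := x) (r := r) m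
  nlinarith

lemma qPrev_succ_mul_revCont_le (hx : ∀ n, gaussMap^[n] x ∈ Set.Ioo 0 1) {m : ℕ} (hm : m ≤ r) :
    qPrev x (m + 1) * revCont x r m ≤ qConv x r ∧ qConv x r ≤ 2 * qPrev x (m + 1) * revCont x r m := by
  have h := qPrev_succ_mul_revCont_add (x := x) (r := r) m
  obtain ⟨-, hK₀, hK⟩ := revCont_bounds hx hm
  obtain ⟨hq₀, hq, -⟩ := qPrev_bounds hx m
  constructor <;> nlinarith

lemma revCont_sub_betaP_mul (hx : ∀ n, gaussMap^[n] x ∈ Set.Ioo 0 1) (m : ℕ) :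
    revCont x r m - betaP x m * qConv x r = (-1) ^ (m + r) * (qPrev x m * betaP x (r + 1)) := by
  have hm := pPrev_sub_qPrev_mul hx m
  have hr := pPrev_sub_qPrev_mul hx (r + 1)
  rw [pPrev_succ, qPrev_succ] at hr
  have hsq : ((-1 : ℝ) ^ m) ^ 2 = 1 := by rw [← pow_mul, mul_comm, pow_mul]; norm_num
  rw [revCont]
  linear_combination (-1) ^ (m + 1) * qPrev x m * hr - (-1) ^ (m + 1) * (qConv x r : ℝ) * hm
    + betaP x m * qConv x r * hsq

end RevCont

-- The case `v = 1` is the last step of the orbit of `p_r/q_r` when `cfDigit x (r - 1) = 1`: the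
-- orbit reaches `0` instead of `1`, and `log (1 / 0) = 0 = log 1`.
lemma log_one_div_fract {v : ℝ} (h₀ : 0 < v) (h₁ : v ≤ 1) :
    Real.log (1 / Int.fract v) = Real.log (1 / v) := by
  rcases h₁.lt_or_eq with h | rfl
  · rw [Int.fract_eq_self.2 ⟨h₀.le, h⟩]
  · simp

section ConvergentOrbit

variable {x : ℝ} {r : ℕ}

lemma gaussMap_revCont_div (hx : ∀ n, gaussMap^[n] x ∈ Set.Ioo 0 1) {m : ℕ} (hm : m + 1 ≤ r) :
    gaussMap (revCont x r (m + 1) / revCont x r m) =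
      Int.fract (revCont x r (m + 2) / revCont x r (m + 1)) := by
  have hK : revCont x r (m + 1) ≠ 0 := by linarith [(revCont_bounds hx hm).1]
  rw [gaussMap, one_div_div, revCont_eq m, add_div, mul_div_cancel_right₀ _ hK,
    Int.fract_intCast_add]

lemma iterate_gaussMap_convergent (hx : ∀ n, gaussMap^[n] x ∈ Set.Ioo 0 1) {j : ℕ}
    (hj : j + 1 < r) :
    gaussMap^[j] (pConv x r / qConv x r) = revCont x r (j + 1) / revCont x r j := by
  induction j with
  | zero => rw [Function.iterate_zero_apply, revCont_zero, revCont_one]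
  | succ j ih =>
    rw [Function.iterate_succ_apply', ih (by omega), gaussMap_revCont_div hx (by omega)]
    obtain ⟨h₁, h₂, -⟩ := revCont_bounds hx (show j + 1 ≤ r by omega)
    exact Int.fract_eq_self.2
      ⟨div_nonneg h₂ (by linarith), (div_lt_one (by linarith)).2 (revCont_succ_lt hx hj)⟩

lemma betaP_convergent (hx : ∀ n, gaussMap^[n] x ∈ Set.Ioo 0 1) {j : ℕ} (hj : j < r) :
    betaP (pConv x r / qConv x r) j = revCont x r j / qConv x r := by
  induction j with
  | zero =>
    simp [betaP, revCont_zero, (qConv_pos hx r).ne']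
  | succ j ih =>
    have hK : revCont x r j ≠ 0 := by linarith [(revCont_bounds hx (show j ≤ r by omega)).1]
    rw [betaP_succ, ih (by omega), iterate_gaussMap_convergent hx hj]
    field_simp

lemma log_one_div_iterate_gaussMap_convergent (hx : ∀ n, gaussMap^[n] x ∈ Set.Ioo 0 1) {j : ℕ}
    (hj : j < r) :
    Real.log (1 / gaussMap^[j] (pConv x r / qConv x r)) =
      Real.log (revCont x r j / revCont x r (j + 1)) := by
  cases j with
  | zero => rw [Function.iterate_zero_apply, revCont_zero, revCont_one, one_div_div]
  | succ i =>
    obtain ⟨h₁, h₂, h₂₁⟩ := revCont_bounds hx (m := i + 1) hj.le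
    have h₂pos : 0 < revCont x r (i + 2) := by linarith [(revCont_bounds hx (m := i + 2) hj).1]
    rw [Function.iterate_succ_apply', iterate_gaussMap_convergent hx hj,
      gaussMap_revCont_div hx (by omega),
      log_one_div_fract (div_pos h₂pos (by linarith)) ((div_le_one (by linarith)).2 h₂₁),
      one_div_div]

lemma wiltonFinite_convergent (hx : ∀ n, gaussMap^[n] x ∈ Set.Ioo 0 1) :
    wiltonFinite (pConv x r / qConv x r) r = ∑ j ∈ range r,
      (-1) ^ j * (revCont x r j / qConv x r) * Real.log (revCont x r j / revCont x r (j + 1)) :=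
  sum_congr rfl fun j hj => by
    rw [betaP_convergent hx (mem_range.1 hj),
      log_one_div_iterate_gaussMap_convergent hx (mem_range.1 hj)]

end ConvergentOrbit

lemma abs_log_sub_log_le {u v c : ℝ} (hc : 0 < c) (hu : c ≤ u) (hv : c ≤ v) :
    |Real.log u - Real.log v| ≤ |u - v| / c := by
  wlog h : v ≤ u generalizing u v
  · rw [abs_sub_comm, abs_sub_comm u]; exact this hv hu (le_of_not_ge h)
  have hv₀ : 0 < v := hc.trans_le hv
  rw [abs_of_nonneg (sub_nonneg.2 (Real.log_le_log hv₀ h)), abs_of_nonneg (sub_nonneg.2 h),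
    ← Real.log_div (hv₀.trans_le h).ne' hv₀.ne']
  calc Real.log (u / v) ≤ u / v - 1 := Real.log_le_sub_one_of_pos (div_pos (hv₀.trans_le h) hv₀)
    _ = (u - v) / v := by field_simp
    _ ≤ (u - v) / c := div_le_div_of_nonneg_left (sub_nonneg.2 h) hc hv

lemma abs_mul_log_div_sub_mul_log_div_le {b b' c c' : ℝ} (hb : 0 < b) (hb' : 0 < b') (hc : 0 < c)
    (hc' : 0 < c') :
    |b * Real.log (b / b') - c * Real.log (c / c')| ≤
      |b - c| * |Real.log (c / c')| + b * |Real.log b - Real.log c| +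
        b * |Real.log b' - Real.log c'| := by
  have h : b * Real.log (b / b') - c * Real.log (c / c') = (b - c) * Real.log (c / c') +
      b * (Real.log b - Real.log c) - b * (Real.log b' - Real.log c') := by
    rw [Real.log_div hb.ne' hb'.ne', Real.log_div hc.ne' hc'.ne']; ring
  rw [h, ← abs_mul, ← abs_of_pos hb, ← abs_mul, ← abs_mul, abs_of_pos hb]
  exact (abs_sub _ _).trans (add_le_add_left (abs_add_le _ _) _)

section Estimates

variable {x : ℝ} {r : ℕ}

lemma abs_revCont_div_sub_betaP (hx : ∀ n, gaussMap^[n] x ∈ Set.Ioo 0 1) (m : ℕ) :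
    |revCont x r m / qConv x r - betaP x m| = qPrev x m * betaP x (r + 1) / qConv x r := by
  have hq := qConv_pos hx r
  rw [← mul_div_cancel_right₀ (betaP x m) hq.ne', ← sub_div, revCont_sub_betaP_mul hx, abs_div,
    abs_mul, abs_pow, abs_neg, abs_one, one_pow, one_mul,
    abs_of_nonneg (mul_nonneg (qPrev_bounds hx m).1 (betaP_pos hx _).le), abs_of_pos hq]

lemma abs_log_revCont_div_sub_log_betaP_le (hx : ∀ n, gaussMap^[n] x ∈ Set.Ioo 0 1) {m : ℕ}
    (hm : m ≤ r) :
    |Real.log (revCont x r m / qConv x r) - Real.log (betaP x m)| ≤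
      2 * qPrev x m * (∏ i ∈ Ico m (r + 1), gaussMap^[i] x) / qConv x r := by
  have hq := qConv_pos hx r
  have hQ : 0 < qPrev x (m + 1) := by linarith [(qPrev_bounds hx m).2.2]
  have hc : 0 < 1 / (2 * qPrev x (m + 1)) := by positivity
  have hK : 1 / (2 * qPrev x (m + 1)) ≤ revCont x r m / qConv x r := by
    rw [div_le_div_iff₀ (by positivity) hq]
    linarith [(qPrev_succ_mul_revCont_le hx hm).2]
  have hβ : 1 / (2 * qPrev x (m + 1)) ≤ betaP x m := by
    rw [div_le_iff₀ (by positivity)]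
    linarith [one_le_two_mul_qPrev_succ_mul_betaP hx m]
  have hP : 0 ≤ ∏ i ∈ Ico m (r + 1), gaussMap^[i] x := prod_nonneg fun i _ => (hx i).1.le
  calc _ ≤ |revCont x r m / qConv x r - betaP x m| / (1 / (2 * qPrev x (m + 1))) :=
        abs_log_sub_log_le hc hK hβ
    _ = 2 * qPrev x m * ((betaP x m * qPrev x (m + 1)) * ∏ i ∈ Ico m (r + 1), gaussMap^[i] x)
          / qConv x r := by
        rw [abs_revCont_div_sub_betaP hx, ← betaP_mul_prod_Ico (show m ≤ r + 1 by omega)]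
        field_simp
    _ ≤ 2 * qPrev x m * (1 * ∏ i ∈ Ico m (r + 1), gaussMap^[i] x) / qConv x r := by
        gcongr
        · exact mul_nonneg zero_le_two (qPrev_bounds hx m).1
        · exact betaP_mul_qPrev_succ_le_one hx m
    _ = _ := by rw [one_mul]

lemma revCont_div_mul_qPrev_succ_le_one (hx : ∀ n, gaussMap^[n] x ∈ Set.Ioo 0 1) {m : ℕ}
    (hm : m ≤ r) : revCont x r m / qConv x r * qPrev x (m + 1) ≤ 1 := by
  have hq := qConv_pos hx r
  rw [div_mul_eq_mul_div, div_le_one hq, mul_comm]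
  exact (qPrev_succ_mul_revCont_le hx hm).1

lemma abs_revCont_div_sub_betaP_mul_log_le (hx : ∀ n, gaussMap^[n] x ∈ Set.Ioo 0 1) {j : ℕ}
    (hj : j ≤ r) :
    |revCont x r j / qConv x r - betaP x j| * Real.log (1 / gaussMap^[j] x) ≤
      (∏ i ∈ Ico (j + 1) (r + 1), gaussMap^[i] x) / qConv x r := by
  have hq := qConv_pos hx r
  obtain ⟨ht₀, ht₁⟩ := hx j
  -- `t log (1 / t) ≤ 1` absorbs the logarithm into the factor `t_j` of `betaP x (r + 1)`.
  have htlog : gaussMap^[j] x * Real.log (1 / gaussMap^[j] x) ≤ 1 := by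
    have := Real.abs_log_mul_self_lt _ ht₀ ht₁.le
    rw [one_div, Real.log_inv]
    linarith [neg_abs_le (Real.log (gaussMap^[j] x) * gaussMap^[j] x)]
  rw [abs_revCont_div_sub_betaP hx, ← betaP_mul_prod_Ico (show j + 1 ≤ r + 1 by omega),
    betaP_succ, div_mul_eq_mul_div, div_le_div_iff_of_pos_right hq]
  calc qPrev x j * (betaP x j * gaussMap^[j] x * ∏ i ∈ Ico (j + 1) (r + 1), gaussMap^[i] x) *
        Real.log (1 / gaussMap^[j] x)
      = (betaP x j * qPrev x j) * (gaussMap^[j] x * Real.log (1 / gaussMap^[j] x)) *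
          ∏ i ∈ Ico (j + 1) (r + 1), gaussMap^[i] x := by ring
    _ ≤ 1 * 1 * ∏ i ∈ Ico (j + 1) (r + 1), gaussMap^[i] x := by
        gcongr
        · exact prod_nonneg fun i _ => (hx i).1.le
        · exact mul_nonneg ht₀.le (Real.log_nonneg (one_le_one_div ht₀ ht₁.le))
        · exact betaP_mul_qPrev_le_one hx j
    _ = _ := by ring

lemma abs_wiltonTerm_convergent_sub_le (hx : ∀ n, gaussMap^[n] x ∈ Set.Ioo 0 1) {j : ℕ}
    (hj : j < r) :
    |revCont x r j / qConv x r * Real.log (revCont x r j / revCont x r (j + 1)) -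
        betaP x j * Real.log (1 / gaussMap^[j] x)| ≤
      5 * (∏ i ∈ Ico (j + 1) (r + 1), gaussMap^[i] x) / qConv x r := by
  have hq := qConv_pos hx r
  have hK₀ : 0 < revCont x r j := by linarith [(revCont_bounds hx hj.le).1]
  have hK₁ : 0 < revCont x r (j + 1) := by linarith [(revCont_bounds hx hj).1]
  have hβ := betaP_pos hx j
  have ht := hx j
  have hb : 0 ≤ revCont x r j / qConv x r := by positivity
  have hbQ : revCont x r j / qConv x r * qPrev x (j + 1) ≤ 1 :=
    revCont_div_mul_qPrev_succ_le_one hx hj.le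
  have hbQ' : revCont x r j / qConv x r * qPrev x j ≤ 1 :=
    (mul_le_mul_of_nonneg_left (qPrev_bounds hx j).2.1 hb).trans hbQ
  have h₁ := abs_revCont_div_sub_betaP_mul_log_le hx (r := r) hj.le
  have h₂ := mul_le_mul_of_nonneg_left (abs_log_revCont_div_sub_log_betaP_le hx hj.le) hb
  have h₃ := mul_le_mul_of_nonneg_left (abs_log_revCont_div_sub_log_betaP_le hx hj) hb
  rw [prod_eq_prod_Ico_succ_bot (by omega)] at h₂
  have hP : 0 ≤ ∏ i ∈ Ico (j + 1) (r + 1), gaussMap^[i] x := prod_nonneg fun i _ => (hx i).1.le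
  have hlogβ : Real.log (1 / gaussMap^[j] x) = Real.log (betaP x j / betaP x (j + 1)) := by
    rw [betaP_succ, div_mul_cancel_left₀ hβ.ne', one_div]
  have hL : 0 ≤ Real.log (betaP x j / betaP x (j + 1)) :=
    hlogβ ▸ Real.log_nonneg (one_le_one_div ht.1 ht.2.le)
  rw [← div_div_div_cancel_right₀ hq.ne' (revCont x r j) (revCont x r (j + 1)), hlogβ]
  rw [hlogβ] at h₁
  refine (abs_mul_log_div_sub_mul_log_div_le (by positivity) (by positivity) hβ
    (betaP_pos hx (j + 1))).trans ?_
  rw [abs_of_nonneg hL]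
  generalize ∏ i ∈ Ico (j + 1) (r + 1), gaussMap^[i] x = P at h₁ h₂ h₃ hP
  generalize revCont x r j / qConv x r = b at hb hbQ hbQ' h₁ h₂ h₃
  calc _ ≤ P / qConv x r + 2 * ((b * qPrev x j) * gaussMap^[j] x) * (P / qConv x r) +
          2 * (b * qPrev x (j + 1)) * (P / qConv x r) :=
        add_le_add_three h₁ (h₂.trans_eq (by ring)) (h₃.trans_eq (by ring))
    _ ≤ P / qConv x r + 2 * (1 * 1) * (P / qConv x r) + 2 * 1 * (P / qConv x r) := by
        gcongr
        exacts [ht.1.le, ht.2.le]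
    _ = 5 * P / qConv x r := by ring

end Estimates

lemma sum_prod_Ico_le_four {s : ℕ → ℝ} (hs₀ : ∀ i, 0 ≤ s i) (hs₁ : ∀ i, s i ≤ 1)
    (hs₂ : ∀ i, s i * s (i + 1) ≤ 1 / 2) (n : ℕ) :
    ∑ j ∈ range n, ∏ i ∈ Ico (j + 1) n, s i ≤ 4 := by
  have hrec : ∀ n, ∑ j ∈ range (n + 1), ∏ i ∈ Ico (j + 1) (n + 1), s i =
      s n * ∑ j ∈ range n, ∏ i ∈ Ico (j + 1) n, s i + 1 := fun n => by
    rw [sum_range_succ, Ico_self, prod_empty, mul_sum]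
    congr 1
    refine sum_congr rfl fun j hj => ?_
    rw [prod_Ico_succ_top (mem_range.1 hj), mul_comm]
  have hnonneg : ∀ n, 0 ≤ ∑ j ∈ range n, ∏ i ∈ Ico (j + 1) n, s i :=
    fun n => sum_nonneg fun j _ => prod_nonneg fun i _ => hs₀ i
  induction n using Nat.twoStepInduction with
  | zero => simp
  | one => simp
  | more n ih _ =>
    rw [hrec, hrec]
    nlinarith [hs₀ n, hs₀ (n + 1), hs₁ (n + 1), hs₂ n, hnonneg n]

theorem truncated_wilton_near_convergent :
    ∃ C : ℝ, 0 < C ∧ ∀ x : ℝ, Irrational x → 0 < x → x < 1 → ∀ r : ℕ, 1 ≤ r →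
      |wiltonFinite ((pConv x r : ℝ) / (qConv x r : ℝ)) r
          - ∑ j ∈ Finset.range r, (-1 : ℝ) ^ j * betaP x j * Real.log (1 / gaussMap^[j] x)|
        ≤ C * gaussMap^[r] x / (qConv x r : ℝ) := by
  refine ⟨20, by norm_num, fun x hirr hx₀ hx₁ r _ => ?_⟩
  have hx := iterate_gaussMap_mem_Ioo hirr hx₀ hx₁
  have hsum := sum_prod_Ico_le_four (fun i => (hx i).1.le) (fun i => (hx i).2.le)
    (iterate_gaussMap_mul_succ_le_half hx) r
  rw [wiltonFinite_convergent hx, ← sum_sub_distrib]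
  calc _ ≤ ∑ j ∈ range r, 5 * (∏ i ∈ Ico (j + 1) (r + 1), gaussMap^[i] x) / qConv x r := by
        refine (abs_sum_le_sum_abs _ _).trans (sum_le_sum fun j hj => ?_)
        rw [mul_assoc, mul_assoc, ← mul_sub, abs_mul, abs_pow, abs_neg, abs_one, one_pow, one_mul]
        exact abs_wiltonTerm_convergent_sub_le hx (mem_range.1 hj)
    _ = 5 * gaussMap^[r] x / qConv x r * ∑ j ∈ range r, ∏ i ∈ Ico (j + 1) r, gaussMap^[i] x := by
        rw [mul_sum]
        refine sum_congr rfl fun j hj => ?_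
        rw [prod_Ico_succ_top (mem_range.1 hj)]
        ring
    _ ≤ 5 * gaussMap^[r] x / qConv x r * 4 := by
        have := (hx r).1
        have := qConv_pos hx r
        gcongr
    _ = 20 * gaussMap^[r] x / qConv x r := by ring
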